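/- Let K be a field, M a finite J-trivial monoid, and x ∈ M. Suppose x = u·v is a non-trivial factorization of x, i.e., lfix(x)·u ≠ lfix(x) and v·rfix(x) ≠ rfix(x). Then, in MonoidAlgebra K M, the element (u − u^ω)·(v − v^ω) − x lies in the K-span of {y ∈ M : y <_J x}; equivalently, (u − u^ω)(v − v^ω) = x + Σ_{y <_J x} c_y y for some scalars c_y ∈ K. -/

import Mathlib

/-- The `J`-preorder on a monoid: `x ≤_J y` iff `x = u * y * v` for some `u, v`. -/
def leJ {M : Type*} [Monoid M] (x y : M) : Prop := ∃ u v : M, x = u * y * v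

/-- A monoid is `J`-trivial if `M x M = M y M` implies `x = y`. -/
def JTrivial (M : Type*) [Monoid M] : Prop :=
  ∀ x y : M, {z : M | ∃ u v : M, z = u * x * v} = {z : M | ∃ u v : M, z = u * y * v} → x = y

open Classical

/-- `x ^ ω`: the unique idempotent among the positive powers of `x`
(in a finite `J`-trivial monoid it exists and is unique). -/
noncomputable def omegaPow {M : Type*} [Monoid M] (x : M) : M :=
  if h : ∃ e : M, IsIdempotentElem e ∧ ∃ n : ℕ, 0 < n ∧ e = x ^ n then h.choose else 1

/-- `lfix x`: the `≤_J`-minimum of the idempotents `e` with `e * x = x`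
(it exists in a finite `J`-trivial monoid). -/
noncomputable def lfixF {M : Type*} [Monoid M] (x : M) : M :=
  if h : ∃ e : M, (IsIdempotentElem e ∧ e * x = x) ∧
      ∀ f : M, IsIdempotentElem f → f * x = x → leJ e f
  then h.choose else 1

/-- `rfix x`: the `≤_J`-minimum of the idempotents `e` with `x * e = x`
(it exists in a finite `J`-trivial monoid). -/
noncomputable def rfixF {M : Type*} [Monoid M] (x : M) : M :=
  if h : ∃ e : M, (IsIdempotentElem e ∧ x * e = x) ∧
      ∀ f : M, IsIdempotentElem f → x * f = x → leJ e f
  then h.choose else 1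

/-!
Write `u' = u^ω` and `v' = v^ω`. In a `J`-trivial monoid `u' u = u'` and `v v' = v'`, so
`(u - u')(v - v') - x = u' x v' - x v' - u' x`, a combination of elements `J`-below `x`.
None of them equals `x`: if `x v' = x` then `rfix x ≤_J v'`, hence `v' rfix x = rfix x` and so
`v rfix x = v v' rfix x = rfix x`; dually `u' x = x` would give `lfix x u = lfix x`.
-/

section LeJ

variable {M : Type*} [Monoid M]

theorem leJ_trans {x y z : M} (hxy : leJ x y) (hyz : leJ y z) : leJ x z := by
  obtain ⟨a, b, rfl⟩ := hxy
  obtain ⟨c, d, rfl⟩ := hyz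
  exact ⟨a * c, d * b, by simp only [mul_assoc]⟩

theorem JTrivial.leJ_antisymm (hJ : JTrivial M) {x y : M} (hxy : leJ x y) (hyx : leJ y x) :
    x = y :=
  hJ x y (Set.ext fun _ => ⟨fun h => leJ_trans h hxy, fun h => leJ_trans h hyx⟩)

theorem JTrivial.mul_eq_right_of_leJ (hJ : JTrivial M) {e f : M} (he : IsIdempotentElem e)
    (hf : IsIdempotentElem f) (hef : leJ e f) : f * e = e := by
  obtain ⟨a, b, hab⟩ := hef
  have hfbe : f * b * e = e := hJ.leJ_antisymm ⟨f * b, 1, by simp only [mul_one]⟩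
    ⟨a, 1, by rw [mul_one, ← mul_assoc, ← mul_assoc, ← hab, he.eq]⟩
  rw [← hfbe, ← mul_assoc, ← mul_assoc, hf.eq]

theorem JTrivial.mul_eq_left_of_leJ (hJ : JTrivial M) {e f : M} (he : IsIdempotentElem e)
    (hf : IsIdempotentElem f) (hef : leJ e f) : e * f = e := by
  obtain ⟨a, b, hab⟩ := hef
  have heaf : e * a * f = e := hJ.leJ_antisymm ⟨1, a * f, by rw [one_mul, mul_assoc]⟩
    ⟨1, b, by rw [one_mul, mul_assoc, mul_assoc, ← mul_assoc a, ← hab, he.eq]⟩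
  rw [← heaf, mul_assoc, hf.eq]

end LeJ

section Idempotents

variable {M : Type*} [Monoid M]

theorem exists_pow_isIdempotentElem [Finite M] (x : M) :
    ∃ n, 0 < n ∧ IsIdempotentElem (x ^ n) := by
  obtain ⟨a, b, hab, h⟩ := Finite.exists_ne_map_eq_of_infinite (fun n : ℕ => x ^ n)
  wlog hlt : a < b generalizing a b
  · exact this b a hab.symm h.symm (by omega)
  have hperiod : ∀ k m, a ≤ m → x ^ (m + k * (b - a)) = x ^ m := by
    intro k
    induction k with
    | zero => simp
    | succ k ih =>
      intro m hm
      calc x ^ (m + (k + 1) * (b - a))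
          = x ^ b * x ^ (m - a + k * (b - a)) := by rw [← pow_add]; congr 1; rw [add_mul]; omega
        _ = x ^ (m + k * (b - a)) := by rw [← h, ← pow_add]; congr 1; omega
        _ = x ^ m := ih m hm
  have hd : 0 < b - a := by omega
  have ha : a ≤ (a + 1) * (b - a) := (Nat.le_succ a).trans (Nat.le_mul_of_pos_right _ hd)
  exact ⟨(a + 1) * (b - a), Nat.mul_pos a.succ_pos hd,
    by rw [IsIdempotentElem, ← pow_add, hperiod _ _ ha]⟩

theorem omegaPow_spec [Finite M] (x : M) :
    IsIdempotentElem (omegaPow x) ∧ ∃ n, 0 < n ∧ omegaPow x = x ^ n := by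
  obtain ⟨n, hn, hidem⟩ := exists_pow_isIdempotentElem x
  have h : ∃ e : M, IsIdempotentElem e ∧ ∃ n : ℕ, 0 < n ∧ e = x ^ n := ⟨_, hidem, n, hn, rfl⟩
  rw [omegaPow, dif_pos h]
  exact h.choose_spec

theorem JTrivial.pow_succ_eq_of_isIdempotentElem (hJ : JTrivial M) {x : M} {n : ℕ}
    (hn : 0 < n) (h : IsIdempotentElem (x ^ n)) : x ^ (n + 1) = x ^ n := by
  obtain ⟨k, rfl⟩ : ∃ k, n = k + 1 := ⟨n - 1, by omega⟩
  refine hJ.leJ_antisymm ⟨1, x, by rw [one_mul, pow_succ]⟩ ⟨x ^ k, 1, ?_⟩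
  rw [mul_one, ← pow_add, ← h.eq, ← pow_add]
  congr 1
  omega

theorem JTrivial.mul_omegaPow (hJ : JTrivial M) [Finite M] (x : M) :
    x * omegaPow x = omegaPow x := by
  obtain ⟨hidem, n, hn, hx⟩ := omegaPow_spec x
  rw [hx, ← pow_succ', hJ.pow_succ_eq_of_isIdempotentElem hn (hx ▸ hidem)]

theorem JTrivial.omegaPow_mul (hJ : JTrivial M) [Finite M] (x : M) :
    omegaPow x * x = omegaPow x := by
  obtain ⟨hidem, n, hn, hx⟩ := omegaPow_spec x
  rw [hx, ← pow_succ, hJ.pow_succ_eq_of_isIdempotentElem hn (hx ▸ hidem)]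

theorem Submonoid.exists_isIdempotentElem_leJ_minimum [Finite M] (S : Submonoid M) :
    ∃ e ∈ S, IsIdempotentElem e ∧ ∀ f ∈ S, IsIdempotentElem f → leJ e f := by
  let r : M → M → Prop := fun e f => leJ f e
  have : IsTrans M r := ⟨fun _ _ _ hab hbc => leJ_trans hbc hab⟩
  have : Nonempty {e // e ∈ S ∧ IsIdempotentElem e} := ⟨⟨1, S.one_mem, IsIdempotentElem.one⟩⟩
  have hdir : Directed r (fun e : {e // e ∈ S ∧ IsIdempotentElem e} => e.1) := by
    rintro ⟨e, heS, -⟩ ⟨f, hfS, -⟩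
    obtain ⟨n, hn, hidem⟩ := exists_pow_isIdempotentElem (e * f)
    obtain ⟨k, rfl⟩ : ∃ k, n = k + 1 := ⟨n - 1, by omega⟩
    refine ⟨⟨_, S.pow_mem (S.mul_mem heS hfS) _, hidem⟩, ?_, ?_⟩
    · exact ⟨1, f * (e * f) ^ k,
        show (e * f) ^ (k + 1) = 1 * e * _ by rw [one_mul, pow_succ', mul_assoc]⟩
    · exact ⟨(e * f) ^ k * e, 1,
        show (e * f) ^ (k + 1) = _ * f * 1 by rw [mul_one, pow_succ, mul_assoc]⟩
  obtain ⟨⟨e, heS, he⟩, hmin⟩ := hdir.finite_le id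
  exact ⟨e, heS, he, fun f hfS hf => hmin ⟨f, hfS, hf⟩⟩

end Idempotents

section Fix

variable {M : Type*} [Monoid M] [Finite M]

theorem lfixF_spec (x : M) :
    (IsIdempotentElem (lfixF x) ∧ lfixF x * x = x) ∧
      ∀ f : M, IsIdempotentElem f → f * x = x → leJ (lfixF x) f := by
  let S : Submonoid M :=
    { carrier := {e | e * x = x}
      one_mem' := one_mul x
      mul_mem' := fun {e f} (he : e * x = x) (hf : f * x = x) =>
        show e * f * x = x by rw [mul_assoc, hf, he] }
  obtain ⟨e, heS, he, hmin⟩ := S.exists_isIdempotentElem_leJ_minimum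
  have h : ∃ e : M, (IsIdempotentElem e ∧ e * x = x) ∧
      ∀ f : M, IsIdempotentElem f → f * x = x → leJ e f :=
    ⟨e, ⟨he, heS⟩, fun f hf hfx => hmin f hfx hf⟩
  rw [lfixF, dif_pos h]
  exact h.choose_spec

theorem rfixF_spec (x : M) :
    (IsIdempotentElem (rfixF x) ∧ x * rfixF x = x) ∧
      ∀ f : M, IsIdempotentElem f → x * f = x → leJ (rfixF x) f := by
  let S : Submonoid M :=
    { carrier := {e | x * e = x}
      one_mem' := mul_one x
      mul_mem' := fun {e f} (he : x * e = x) (hf : x * f = x) =>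
        show x * (e * f) = x by rw [← mul_assoc, he, hf] }
  obtain ⟨e, heS, he, hmin⟩ := S.exists_isIdempotentElem_leJ_minimum
  have h : ∃ e : M, (IsIdempotentElem e ∧ x * e = x) ∧
      ∀ f : M, IsIdempotentElem f → x * f = x → leJ e f :=
    ⟨e, ⟨he, heS⟩, fun f hf hxf => hmin f hxf hf⟩
  rw [rfixF, dif_pos h]
  exact h.choose_spec

theorem JTrivial.lfixF_mul_eq_of_isIdempotentElem (hJ : JTrivial M) {x e u : M}
    (he : IsIdempotentElem e) (hex : e * x = x) (heu : e * u = e) : lfixF x * u = lfixF x := by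
  obtain ⟨⟨hidem, -⟩, hmin⟩ := lfixF_spec x
  have hle : lfixF x * e = lfixF x := hJ.mul_eq_left_of_leJ hidem he (hmin e he hex)
  rw [← hle, mul_assoc, heu]

theorem JTrivial.mul_rfixF_eq_of_isIdempotentElem (hJ : JTrivial M) {x e v : M}
    (he : IsIdempotentElem e) (hxe : x * e = x) (hve : v * e = e) : v * rfixF x = rfixF x := by
  obtain ⟨⟨hidem, -⟩, hmin⟩ := rfixF_spec x
  have hle : e * rfixF x = rfixF x := hJ.mul_eq_right_of_leJ hidem he (hmin e he hxe)
  rw [← hle, ← mul_assoc, hve]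

end Fix

theorem map_sub_mul_map_sub_sub_map_mul {M R : Type*} [Monoid M] [Ring R] (f : M →* R)
    {x u v u' v' : M} (hx : u * v = x) (hu : u' * u = u') (hv : v * v' = v') :
    (f u - f u') * (f v - f v') - f x = f (u' * x * v') - f (x * v') - f (u' * x) := by
  have huv' : u * v' = x * v' := by rw [← hx, mul_assoc, hv]
  have hu'v : u' * v = u' * x := by rw [← hx, ← mul_assoc, hu]
  have hu'v' : u' * v' = u' * x * v' := by
    calc u' * v' = u' * u * (v * v') := by rw [hu, hv]
      _ = u' * x * v' := by rw [← hx]; simp only [mul_assoc]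
  rw [sub_mul, mul_sub, mul_sub, ← map_mul, ← map_mul, ← map_mul, ← map_mul, hx, huv', hu'v,
    hu'v']
  abel

/-- If `x = u * v` is a non-trivial factorization in a finite `J`-trivial monoid `M`, then in
`K[M]` one has `(u - u^ω)(v - v^ω) = x + Σ_{y <_J x} c_y y`, i.e. the difference between
`(u - u^ω)(v - v^ω)` and `x` lies in the span of the elements strictly `J`-below `x`. -/
theorem nontrivial_factorization_radical_square (K : Type*) [Field K] {M : Type*}
    [Monoid M] [Fintype M] (hJ : JTrivial M) (x u v : M)
    (hx : x = u * v)
    (hu : lfixF x * u ≠ lfixF x) (hv : v * rfixF x ≠ rfixF x) :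
    (MonoidAlgebra.of K M u - MonoidAlgebra.of K M (omegaPow u))
      * (MonoidAlgebra.of K M v - MonoidAlgebra.of K M (omegaPow v))
      - MonoidAlgebra.of K M x
    ∈ Submodule.span K
        ((fun z : M => (MonoidAlgebra.of K M z : MonoidAlgebra K M)) ''
          {y : M | leJ y x ∧ y ≠ x}) := by
  have hxv : x * omegaPow v ≠ x := fun h =>
    hv (hJ.mul_rfixF_eq_of_isIdempotentElem (omegaPow_spec v).1 h (hJ.mul_omegaPow v))
  have hux : omegaPow u * x ≠ x := fun h =>
    hu (hJ.lfixF_mul_eq_of_isIdempotentElem (omegaPow_spec u).1 h (hJ.omegaPow_mul u))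
  have huxv : omegaPow u * x * omegaPow v ≠ x := fun h =>
    hxv (by rw [← h, mul_assoc _ (omegaPow v), (omegaPow_spec v).1.eq])
  have below : ∀ {y}, leJ y x → y ≠ x → MonoidAlgebra.of K M y ∈ Submodule.span K
      ((fun z : M => (MonoidAlgebra.of K M z : MonoidAlgebra K M)) ''
        {y : M | leJ y x ∧ y ≠ x}) := fun hyx hne => Submodule.subset_span ⟨_, ⟨hyx, hne⟩, rfl⟩
  rw [map_sub_mul_map_sub_sub_map_mul _ hx.symm (hJ.omegaPow_mul u) (hJ.mul_omegaPow v)]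
  exact sub_mem (sub_mem (below ⟨_, _, rfl⟩ huxv) (below ⟨1, _, by rw [one_mul]⟩ hxv))
    (below ⟨_, 1, (mul_one _).symm⟩ hux)
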